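/- arXiv:1801.04803 — 2 statements merged into one kernel-verified Lean document; each statement's English description precedes it below -/
import Mathlib

section
/- Let q be a prime power and let v, d, k be integers with d even, 2 ≤ d/2 ≤ k ≤ v/2, k < d, and v < 3d/2. Let C be a (v,#C,d;k)_q constant dimension code that contains a (v,d;k)_q lifted MRD code. Then #C ≤ q^{(v−k)(k−d/2+1)} + 1. -/
open Module

/-- The subspace of `F_q^v` of vectors whose first `k` coordinates vanish
(denoted `Γ` in the paper); its complement (as a set of vectors) is `Δ`. -/
def Gamma (K : Type) [Field K] (k v : ℕ) : Submodule K (Fin v → K) where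
  carrier := {x | ∀ j : Fin v, (j : ℕ) < k → x j = 0}
  add_mem' := by
    intro a b ha hb j hj
    simp [ha j hj, hb j hj]
  zero_mem' := by
    intro j hj
    rfl
  smul_mem' := by
    intro c x hx j hj
    simp [hx j hj]

/-- The subspace distance `d_S(U,W) = dim(U+W) - dim(U ∩ W)`. -/
noncomputable def sDist {K : Type} [Field K] {v : ℕ}
    (U W : Submodule K (Fin v → K)) : ℕ :=
  finrank K ↥(U ⊔ W) - finrank K ↥(U ⊓ W)

/-- A constant dimension code of dimension `k` and minimum subspace distance `d`. -/
def IsCDC (K : Type) [Field K] (v : ℕ) (d k : ℤ)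
    (C : Set (Submodule K (Fin v → K))) : Prop :=
  (∀ U ∈ C, (finrank K U : ℤ) = k) ∧
  ∀ U ∈ C, ∀ W ∈ C, U ≠ W → d ≤ (sDist U W : ℤ)

/-- `A_q(v,d;k)`: the maximum cardinality of a `(v,M,d;k)_q` CDC. -/
noncomputable def Amax (K : Type) [Field K] (v : ℕ) (d k : ℤ) : ℕ :=
  sSup {n | ∃ C : Set (Submodule K (Fin v → K)), IsCDC K v d k C ∧ C.ncard = n}

/-- Row `i` of the `k × v` matrix `(I_k | A)`. -/
def liftRow {K : Type} [Field K] {k v : ℕ} (A : Matrix (Fin k) (Fin (v - k)) K)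
    (i : Fin k) : Fin v → K := fun j =>
  if (j : ℕ) < k then (if (i : ℕ) = (j : ℕ) then 1 else 0)
  else if h2 : (j : ℕ) - k < v - k then A i ⟨(j : ℕ) - k, h2⟩ else 0

/-- `M` is a `(v,d;k)_q` lifted MRD code: `M = { rowspan (I_k | A) : A ∈ R }`
for a `[k × (v-k), q^((v-k)(k-d/2+1)), d/2]_q` rank metric code `R`. -/
def IsLMRD (q : ℕ) (K : Type) [Field K] (v d k : ℕ)
    (M : Set (Submodule K (Fin v → K))) : Prop :=
  ∃ R : Set (Matrix (Fin k) (Fin (v - k)) K),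
    R.ncard = q ^ ((v - k) * (k - d / 2 + 1)) ∧
    (∀ A ∈ R, ∀ B ∈ R, A ≠ B → d / 2 ≤ (A - B).rank) ∧
    M = {U | ∃ A ∈ R, U = Submodule.span K (Set.range (liftRow A))}

/-- The Gaussian binomial coefficient `[a choose b]_q`, defined to be `0`
unless `0 ≤ b ≤ a`. -/
noncomputable def qBin (q : ℕ) (a b : ℤ) : ℚ :=
  if 0 ≤ b ∧ b ≤ a then
    ∏ i ∈ Finset.range b.toNat,
      ((q : ℚ) ^ a - (q : ℚ) ^ (i : ℤ)) / ((q : ℚ) ^ b - (q : ℚ) ^ (i : ℤ))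
  else 0

/-- `[[w, u; c]]_q = q^(u*c) * [w-u choose c]_q` for `0 ≤ c ≤ w-u`, else `0`. -/
noncomputable def qBinD (q : ℕ) (w u c : ℤ) : ℚ :=
  if 0 ≤ c ∧ c ≤ w - u then (q : ℚ) ^ (u * c) * qBin q (w - u) c else 0

section Helpers

variable {K : Type} [Field K] {k v : ℕ}

/-- Projection onto the first `k` coordinates. -/
def headMap (K : Type) [Field K] (k v : ℕ) (h : k ≤ v) :
    (Fin v → K) →ₗ[K] (Fin k → K) :=
  LinearMap.funLeft K K (Fin.castLE h)

lemma headMap_apply (h : k ≤ v) (x : Fin v → K) (i : Fin k) :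
    headMap K k v h x i = x (Fin.castLE h i) := rfl

lemma headMap_surjective (h : k ≤ v) : Function.Surjective (headMap K k v h) :=
  LinearMap.funLeft_surjective_of_injective K K _ (Fin.castLE_injective h)

lemma sum_smul_liftRow_head (c : Fin k → K) (A : Matrix (Fin k) (Fin (v - k)) K)
    (j : Fin v) (hj : (j : ℕ) < k) :
    (∑ i, c i • liftRow A i) j = c ⟨(j : ℕ), hj⟩ := by
  have : ∀ i : Fin k, c i • liftRow A i j
      = if i = ⟨(j : ℕ), hj⟩ then c i else 0 := by
    intro i
    simp only [liftRow, hj, if_true, Pi.smul_apply, smul_eq_mul]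
    by_cases h : i = ⟨(j : ℕ), hj⟩
    · subst h; simp
    · have : ¬ ((i : ℕ) = (j : ℕ)) := by
        intro hh; exact h (Fin.ext hh)
      simp [this, h]
  rw [Finset.sum_apply]
  calc ∑ i : Fin k, (c i • liftRow A i) j
      = ∑ i : Fin k, if i = ⟨(j : ℕ), hj⟩ then c i else 0 :=
        Finset.sum_congr rfl fun i _ => this i
    _ = c ⟨(j : ℕ), hj⟩ := by simp

lemma sum_smul_liftRow_tail (c : Fin k → K) (A : Matrix (Fin k) (Fin (v - k)) K)
    (j : Fin v) (hj : ¬ (j : ℕ) < k) (h2 : (j : ℕ) - k < v - k) :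
    (∑ i, c i • liftRow A i) j = ∑ i, c i * A i ⟨(j : ℕ) - k, h2⟩ := by
  rw [Finset.sum_apply]
  refine Finset.sum_congr rfl fun i _ => ?_
  simp [liftRow, hj, h2]

lemma mem_span_liftRow (h : k ≤ v) (A : Matrix (Fin k) (Fin (v - k)) K)
    (x : Fin v → K) :
    x ∈ Submodule.span K (Set.range (liftRow A)) ↔
      x = ∑ i, x (Fin.castLE h i) • liftRow A i := by
  constructor
  · intro hx
    obtain ⟨c, hc⟩ := (Submodule.mem_span_range_iff_exists_fun K).mp hx
    have hcx : ∀ i : Fin k, x (Fin.castLE h i) = c i := by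
      intro i
      have hlt : ((Fin.castLE h i : Fin v) : ℕ) < k := i.isLt
      rw [← hc, sum_smul_liftRow_head c A _ hlt]
      exact congrArg c (Fin.ext rfl)
    have hsum : (∑ i, x (Fin.castLE h i) • liftRow A i) = ∑ i, c i • liftRow A i :=
      Finset.sum_congr rfl fun i _ => by rw [hcx]
    rw [hsum, hc]
  · intro hx
    rw [hx]
    exact Submodule.sum_mem _ fun i _ =>
      Submodule.smul_mem _ _ (Submodule.subset_span (Set.mem_range_self i))

lemma liftRow_linearIndependent (h : k ≤ v) (A : Matrix (Fin k) (Fin (v - k)) K) :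
    LinearIndependent K (liftRow A) := by
  rw [Fintype.linearIndependent_iff]
  intro g hg i
  have hlt : ((Fin.castLE h i : Fin v) : ℕ) < k := i.isLt
  have := congrFun hg (Fin.castLE h i)
  rw [sum_smul_liftRow_head g A _ hlt] at this
  simpa using this

lemma finrank_span_liftRow (h : k ≤ v) (A : Matrix (Fin k) (Fin (v - k)) K) :
    finrank K ↥(Submodule.span K (Set.range (liftRow A))) = k := by
  rw [finrank_span_eq_card (liftRow_linearIndependent h A), Fintype.card_fin]

lemma liftSpan_injective (h : k ≤ v) :
    Function.Injective (fun A : Matrix (Fin k) (Fin (v - k)) K =>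
      Submodule.span K (Set.range (liftRow A))) := by
  intro A B hAB
  ext i j
  have hAB' : Submodule.span K (Set.range (liftRow A)) = Submodule.span K (Set.range (liftRow B)) := hAB
  have hmem : liftRow A i ∈ Submodule.span K (Set.range (liftRow B)) := by
    rw [← hAB']
    exact Submodule.subset_span (Set.mem_range_self i)
  have heq := (mem_span_liftRow h B _).mp hmem
  have hc : ∀ t : Fin k, liftRow A i (Fin.castLE h t) = if t = i then 1 else 0 := by
    intro t
    have hlt : ((Fin.castLE h t : Fin v) : ℕ) < k := t.isLt
    simp only [liftRow, hlt, if_true]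
    by_cases hti : t = i
    · subst hti; simp
    · have : ¬ ((i : ℕ) = (t : ℕ)) := fun hh => hti (Fin.ext hh.symm)
      simp [this, hti]
  have hjv : k + (j : ℕ) < v := by omega
  set jj : Fin v := ⟨k + (j : ℕ), hjv⟩ with hjj
  have hnl : ¬ ((jj : ℕ) < k) := by simp [hjj]
  have h2 : (jj : ℕ) - k < v - k := by
    simp only [hjj]
    omega
  have hA : liftRow A i jj = A i ⟨(jj : ℕ) - k, h2⟩ := by
    simp [liftRow, hnl, h2]
  have hB := congrFun heq jj
  rw [sum_smul_liftRow_tail _ B jj hnl h2] at hB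
  have hfin : (⟨(jj : ℕ) - k, h2⟩ : Fin (v - k)) = j := by
    ext; simp [hjj]
  rw [hA, hfin] at hB
  simp only [hc] at hB
  rw [hB]
  simp

end Helpers

section MRD

variable {K : Type} [Field K] [Fintype K]

/-- MRD interpolation: for a rank-metric code of Singleton-bound cardinality and a
full-row-rank `T`, the map `B ↦ T * B` hits every matrix. -/
lemma mrd_surj (q : ℕ) (hq : Fintype.card K = q) {k m r δ : ℕ}
    (R : Set (Matrix (Fin k) (Fin m) K)) (hcard : R.ncard = q ^ (m * r))
    (hdist : ∀ A ∈ R, ∀ B ∈ R, A ≠ B → δ ≤ (A - B).rank)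
    (hr : r + δ = k + 1)
    (T : Matrix (Fin r) (Fin k) K) (hT : LinearIndependent K T)
    (Z : Matrix (Fin r) (Fin m) K) : ∃ B ∈ R, T * B = Z := by
  classical
  set f : Matrix (Fin k) (Fin m) K → Matrix (Fin r) (Fin m) K := fun B => T * B with hf
  have hinj : Set.InjOn f R := by
    intro B₁ h₁ B₂ h₂ heq
    by_contra hne
    have hrank : δ ≤ (B₁ - B₂).rank := hdist B₁ h₁ B₂ h₂ hne
    set D := B₁ - B₂ with hD
    have heq' : T * B₁ = T * B₂ := heq
    have hTD : T * D = 0 := by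
      rw [hD, Matrix.mul_sub, heq', sub_self]
    -- each row of T lies in the kernel of `(Matrix.transpose D).mulVecLin`
    have hker : ∀ i : Fin r, T i ∈ LinearMap.ker ((Matrix.transpose D).mulVecLin) := by
      intro i
      rw [LinearMap.mem_ker, Matrix.mulVecLin_apply, Matrix.mulVec_transpose]
      funext j
      have := congrFun (congrFun hTD i) j
      simpa [Matrix.mul_apply, Matrix.vecMul, dotProduct] using this
    set T' : Fin r → ↥(LinearMap.ker ((Matrix.transpose D).mulVecLin)) := fun i => ⟨T i, hker i⟩ with hT'
    have hT'li : LinearIndependent K T' := by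
      have : T = (LinearMap.ker ((Matrix.transpose D).mulVecLin)).subtype ∘ T' := rfl
      exact LinearIndependent.of_comp _ (this ▸ hT)
    have hle : r ≤ finrank K ↥(LinearMap.ker ((Matrix.transpose D).mulVecLin)) := by
      simpa using hT'li.fintype_card_le_finrank
    have hrn := LinearMap.finrank_range_add_finrank_ker ((Matrix.transpose D).mulVecLin)
    have hdim : finrank K (Fin k → K) = k := by simp
    have hrT : finrank K ↥(LinearMap.range ((Matrix.transpose D).mulVecLin)) = D.rank := by
      rw [← Matrix.rank_transpose D]; rfl
    rw [hdim, hrT] at hrn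
    omega
  have hRfin : R.Finite := Set.toFinite R
  have himage : f '' R = Set.univ := by
    refine Set.eq_of_subset_of_ncard_le (Set.subset_univ _) ?_ Set.finite_univ
    rw [Set.ncard_image_of_injOn hinj, hcard, Set.ncard_univ, Nat.card_eq_fintype_card]
    have : Fintype.card (Matrix (Fin r) (Fin m) K) = q ^ (r * m) := by
      rw [← hq]
      rw [show Fintype.card (Matrix (Fin r) (Fin m) K)
          = Fintype.card (Fin r → Fin m → K) from rfl]
      simp only [Fintype.card_fun, Fintype.card_fin]
      rw [← pow_mul, mul_comm m r]
    rw [this, mul_comm r m]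
  have : Z ∈ f '' R := by rw [himage]; trivial
  obtain ⟨B, hB, hBZ⟩ := this
  exact ⟨B, hB, hBZ⟩

end MRD

section Part3

variable {K : Type} [Field K] {k v : ℕ}

lemma gamma_eq_ker (h : k ≤ v) :
    Gamma K k v = LinearMap.ker (headMap K k v h) := by
  ext x
  constructor
  · intro hx
    rw [LinearMap.mem_ker]
    funext i
    exact hx (Fin.castLE h i) i.isLt
  · intro hx j hj
    have := congrFun (LinearMap.mem_ker.mp hx) ⟨(j : ℕ), hj⟩
    simpa [headMap, LinearMap.funLeft, Fin.castLE] using this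

lemma finrank_gamma (h : k ≤ v) : k + finrank K ↥(Gamma K k v) = v := by
  have h1 := LinearMap.finrank_range_add_finrank_ker (headMap K k v h)
  rw [LinearMap.range_eq_top.mpr (headMap_surjective h)] at h1
  have h2 : finrank K ↥(⊤ : Submodule K (Fin k → K)) = k := by simp
  have h3 : finrank K (Fin v → K) = v := by simp
  rw [h2, h3] at h1
  rw [gamma_eq_ker h]
  exact h1

lemma finrank_map_add_inf_ker (U : Submodule K (Fin v → K))
    (f : (Fin v → K) →ₗ[K] (Fin k → K)) :
    finrank K ↥(U.map f) + finrank K ↥(U ⊓ LinearMap.ker f) = finrank K ↥U := by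
  have h1 := LinearMap.finrank_range_add_finrank_ker (f.domRestrict U)
  rw [LinearMap.range_domRestrict, LinearMap.ker_domRestrict] at h1
  have h2 : Submodule.comap U.subtype (LinearMap.ker f)
      = Submodule.comap U.subtype (U ⊓ LinearMap.ker f) := by
    ext x
    simp [Submodule.mem_comap, x.2]
  have h3 : finrank K ↥(Submodule.comap U.subtype (U ⊓ LinearMap.ker f))
      = finrank K ↥(U ⊓ LinearMap.ker f) :=
    (Submodule.comapSubtypeEquivOfLe inf_le_left).finrank_eq
  rw [h2, h3] at h1
  exact h1

end Part3

section Key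
variable {K : Type} [Field K] [Fintype K]

lemma key_lemma (q : ℕ) (hq : Fintype.card K = q) {v d k : ℕ}
    (hd : Even d) (hd2 : 2 ≤ d / 2) (hdk : d / 2 ≤ k) (hkv : 2 * k ≤ v)
    (C : Set (Submodule K (Fin v → K))) (hC : IsCDC K v (d : ℤ) (k : ℤ) C)
    (R : Set (Matrix (Fin k) (Fin (v - k)) K))
    (hRcard : R.ncard = q ^ ((v - k) * (k - d / 2 + 1)))
    (hRdist : ∀ A ∈ R, ∀ B ∈ R, A ≠ B → d / 2 ≤ (A - B).rank)
    (hRC : ∀ B ∈ R, Submodule.span K (Set.range (liftRow B)) ∈ C)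
    (U : Submodule K (Fin v → K)) (hU : U ∈ C)
    (hUG : finrank K ↥(U ⊓ Gamma K k v) < d / 2) :
    ∃ B ∈ R, U = Submodule.span K (Set.range (liftRow B)) := by
  classical
  have hkv' : k ≤ v := by omega
  have hr : (k - d / 2 + 1) + d / 2 = k + 1 := by omega
  have hUk : finrank K ↥U = k := by exact_mod_cast hC.1 U hU
  -- dimension of the projection of U to the first k coordinates
  have hmapinf := finrank_map_add_inf_ker U (headMap K k v hkv')
  rw [← gamma_eq_ker hkv'] at hmapinf
  have hproj : k - d / 2 + 1 ≤ finrank K ↥(U.map (headMap K k v hkv')) := by omega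
  obtain ⟨w', hw'⟩ := exists_linearIndependent_of_le_finrank hproj
  set w : Fin (k - d / 2 + 1) → (Fin k → K) := fun i => (w' i : Fin k → K) with hwdef
  have hwli : LinearIndependent K w :=
    hw'.map' (U.map (headMap K k v hkv')).subtype (Submodule.ker_subtype _)
  have hmem : ∀ i, ∃ x ∈ U, headMap K k v hkv' x = w i := by
    intro i
    exact Submodule.mem_map.mp (w' i).2
  choose u hu hwu using hmem
  set T : Matrix (Fin (k - d / 2 + 1)) (Fin k) K := Matrix.of w with hTdef
  set Z : Matrix (Fin (k - d / 2 + 1)) (Fin (v - k)) K :=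
    Matrix.of (fun i j => u i ⟨k + (j : ℕ), by omega⟩) with hZdef
  obtain ⟨B, hBR, hTB⟩ := mrd_surj q hq R hRcard hRdist hr T hwli Z
  refine ⟨B, hBR, ?_⟩
  set W := Submodule.span K (Set.range (liftRow B)) with hWdef
  -- each u i lies in W
  have huW : ∀ i, u i ∈ W := by
    intro i
    rw [hWdef, mem_span_liftRow hkv']
    funext j
    by_cases hj : (j : ℕ) < k
    · rw [sum_smul_liftRow_head _ B j hj]
      have : Fin.castLE hkv' (⟨(j : ℕ), hj⟩ : Fin k) = j := Fin.ext rfl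
      rw [this]
    · have h2 : (j : ℕ) - k < v - k := by omega
      rw [sum_smul_liftRow_tail _ B j hj h2]
      have hcoef : ∀ t : Fin k, u i (Fin.castLE hkv' t) = T i t := by
        intro t
        have := congrFun (hwu i) t
        exact this
      have hTBij := congrFun (congrFun hTB i) ⟨(j : ℕ) - k, h2⟩
      rw [Matrix.mul_apply] at hTBij
      calc u i j = Z i ⟨(j : ℕ) - k, h2⟩ := by
              rw [hZdef]
              show u i j = u i ⟨k + ((j : ℕ) - k), _⟩
              congr 1
              exact Fin.ext (by simp; omega)
        _ = ∑ t, T i t * B t ⟨(j : ℕ) - k, h2⟩ := hTBij.symm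
        _ = ∑ t, u i (Fin.castLE hkv' t) * B t ⟨(j : ℕ) - k, h2⟩ :=
              Finset.sum_congr rfl fun t _ => by rw [hcoef t]
  -- u is linearly independent
  have huli : LinearIndependent K u := by
    refine LinearIndependent.of_comp (headMap K k v hkv') ?_
    have : (headMap K k v hkv') ∘ u = w := funext hwu
    rw [this]
    exact hwli
  -- hence U ⊓ W has dimension at least k - d/2 + 1
  have hspan : Submodule.span K (Set.range u) ≤ U ⊓ W := by
    rw [Submodule.span_le]
    rintro x ⟨i, rfl⟩
    exact ⟨hu i, huW i⟩
  have hrle : k - d / 2 + 1 ≤ finrank K ↥(U ⊓ W) := by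
    have h1 : finrank K ↥(Submodule.span K (Set.range u)) = k - d / 2 + 1 := by
      rw [finrank_span_eq_card huli, Fintype.card_fin]
    rw [← h1]
    exact Submodule.finrank_mono hspan
  -- distance argument
  by_contra hUW
  have hWC : W ∈ C := hRC B hBR
  have hdist := hC.2 U hU W hWC hUW
  have hWk : finrank K ↥W = k := finrank_span_liftRow hkv' B
  have hsum := Submodule.finrank_sup_add_finrank_inf_eq U W
  have hmono : finrank K ↥(U ⊓ W) ≤ finrank K ↥(U ⊔ W) :=
    Submodule.finrank_mono (le_trans inf_le_left le_sup_left)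
  have hdistN : d ≤ sDist U W := by exact_mod_cast hdist
  unfold sDist at hdistN
  have heven : d % 2 = 0 := Nat.even_iff.mp hd
  omega

end Key

/-- for `k < d` and `v < 3d/2`, a CDC containing an LMRD has
cardinality at most `q^((v-k)(k-d/2+1)) + 1`. -/
theorem stmt11 (q : ℕ) (K : Type) [Field K] [Fintype K] (hq : Fintype.card K = q)
    (v d k : ℕ) (hd : Even d) (hd2 : 2 ≤ d / 2) (hdk : d / 2 ≤ k) (hkv : 2 * k ≤ v)
    (hkd : k < d) (hv3d : 2 * v < 3 * d)
    (C M : Set (Submodule K (Fin v → K)))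
    (hC : IsCDC K v (d : ℤ) (k : ℤ) C) (hM : IsLMRD q K v d k M) (hMC : M ⊆ C) :
    C.ncard ≤ q ^ ((v - k) * (k - d / 2 + 1)) + 1 := by
  classical
  obtain ⟨R, hRcard, hRdist, hMeq⟩ := hM
  have hkv' : k ≤ v := by omega
  have hCfin : C.Finite := Set.toFinite C
  -- the LMRD code has the expected cardinality
  have hMimg : M = (fun A => Submodule.span K (Set.range (liftRow A))) '' R := by
    rw [hMeq]
    ext x
    constructor
    · rintro ⟨A, hA, rfl⟩
      exact ⟨A, hA, rfl⟩
    · rintro ⟨A, hA, rfl⟩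
      exact ⟨A, hA, rfl⟩
  have hMcard : M.ncard = q ^ ((v - k) * (k - d / 2 + 1)) := by
    rw [hMimg, Set.ncard_image_of_injective R (liftSpan_injective hkv'), hRcard]
  have hRC : ∀ B ∈ R, Submodule.span K (Set.range (liftRow B)) ∈ C := by
    intro B hB
    apply hMC
    rw [hMeq]
    exact ⟨B, hB, rfl⟩
  -- every codeword outside M meets Gamma in dimension at least d/2
  have hbig : ∀ U ∈ C, U ∉ M → d / 2 ≤ finrank K ↥(U ⊓ Gamma K k v) := by
    intro U hU hUM
    by_contra hlt
    push_neg at hlt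
    obtain ⟨B, hB, hUB⟩ := key_lemma q hq hd hd2 hdk hkv C hC R hRcard hRdist hRC U hU hlt
    exact hUM (by rw [hMeq]; exact ⟨B, hB, hUB⟩)
  -- at most one codeword outside M
  have hsub : (C \ M).Subsingleton := by
    intro U hUd W hWd
    by_contra hne
    have hU : U ∈ C := hUd.1
    have hW : W ∈ C := hWd.1
    have hUG := hbig U hU hUd.2
    have hWG := hbig W hW hWd.2
    have hUk : finrank K ↥U = k := by exact_mod_cast hC.1 U hU
    have hWk : finrank K ↥W = k := by exact_mod_cast hC.1 W hW
    set P := U ⊓ Gamma K k v with hP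
    set Q := W ⊓ Gamma K k v with hQ
    have h1 := Submodule.finrank_sup_add_finrank_inf_eq P Q
    have h2 : finrank K ↥(P ⊔ Q) ≤ finrank K ↥(Gamma K k v) :=
      Submodule.finrank_mono (sup_le inf_le_right inf_le_right)
    have h3 := finrank_gamma (K := K) hkv'
    have h4 : finrank K ↥(P ⊓ Q) ≤ finrank K ↥(U ⊓ W) :=
      Submodule.finrank_mono
        (le_inf (le_trans inf_le_left inf_le_left) (le_trans inf_le_right inf_le_left))
    have hdist := hC.2 U hU W hW hne
    have hdistN : d ≤ sDist U W := by exact_mod_cast hdist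
    unfold sDist at hdistN
    have h5 := Submodule.finrank_sup_add_finrank_inf_eq U W
    have hmono : finrank K ↥(U ⊓ W) ≤ finrank K ↥(U ⊔ W) :=
      Submodule.finrank_mono (le_trans inf_le_left le_sup_left)
    have heven : d % 2 = 0 := Nat.even_iff.mp hd
    omega
  have hsplit : C = M ∪ (C \ M) := (Set.union_diff_cancel hMC).symm
  have hle : (C \ M).ncard ≤ 1 := by
    rcases hsub.eq_empty_or_singleton with h | ⟨x, h⟩
    · rw [h]; simp
    · rw [h]; simp
  calc C.ncard = (M ∪ (C \ M)).ncard := by rw [← hsplit]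
    _ ≤ M.ncard + (C \ M).ncard :=
        Set.ncard_union_le M (C \ M)
    _ ≤ q ^ ((v - k) * (k - d / 2 + 1)) + 1 := by rw [hMcard]; omega
end

section
/- Let q be a prime power and let d, k, v be integers with d even, 2 ≤ d/2 < k < d ≤ 2v/3, and k + d/2 ≤ v. Then A_q(v−k, 2(d−k); d/2) ≤ ([v−k choose k−d/2]_q · [k choose 1]_q / ([k−d/2 choose 1]_q · [d/2 choose k−d/2]_q)) · q^{v−k−d/2}. -/
open Module

/-! Two codewords of dimension `m = d/2` at subspace distance at least `2(d-k)` meet in dimension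
at most `y = k - m`, so every `(y+1)`-dimensional subspace lies in at most one codeword, and
counting these gives `|C| [m, y+1]_q ≤ [v-k, y+1]_q`. Passing from `y` to `y+1` multiplies the
quotient `[v-k, y]_q / [m, y]_q` by `(q^(v-k) - q^y) / (q^m - q^y)`, which is at most
`[k, 1]_q / [y, 1]_q · q^(v-k-m)`. -/

open Finset

section Grassmannian

variable {K V : Type*} [DivisionRing K] [Fintype K] [AddCommGroup V] [Module K V] [Finite V]

def linearIndependentSpanEqEquiv {r : ℕ} (T : Submodule K V) (hT : finrank K T = r) :
    {s : {s : Fin r → V // LinearIndependent K s} // Submodule.span K (Set.range s.1) = T}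
      ≃ {t : Fin r → T // LinearIndependent K t} where
  toFun s := ⟨fun i => ⟨s.1.1 i, s.2.le (Submodule.subset_span (Set.mem_range_self i))⟩,
    s.1.2.of_comp T.subtype⟩
  invFun t := ⟨⟨T.subtype ∘ t.1, t.2.map' T.subtype T.ker_subtype⟩, by
    have hspan : Submodule.span K (Set.range t.1) = ⊤ :=
      t.2.span_eq_top_of_card_eq_finrank' (by simp [hT])
    rw [Set.range_comp, Submodule.span_image, hspan, Submodule.map_subtype_top]⟩
  left_inv _ := rfl
  right_inv _ := rfl

theorem card_finrank_eq_mul_prod {r : ℕ} (hr : r ≤ finrank K V) :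
    Nat.card {T : Submodule K V // finrank K T = r} *
        ∏ i : Fin r, (Fintype.card K ^ r - Fintype.card K ^ (i : ℕ))
      = ∏ i : Fin r, (Fintype.card K ^ finrank K V - Fintype.card K ^ (i : ℕ)) := by
  classical
  have := Fintype.ofFinite {T : Submodule K V // finrank K T = r}
  let span : {s : Fin r → V // LinearIndependent K s} → {T : Submodule K V // finrank K T = r} :=
    fun s => ⟨Submodule.span K (Set.range s.1), by simp [finrank_span_eq_card s.2]⟩
  have card_fiber (T : {T : Submodule K V // finrank K T = r}) :
      Nat.card {s // span s = T}
        = ∏ i : Fin r, (Fintype.card K ^ r - Fintype.card K ^ (i : ℕ)) := by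
    rw [Nat.card_congr ((Equiv.subtypeEquivRight fun s => Subtype.ext_iff).trans
      (linearIndependentSpanEqEquiv T.1 T.2)), card_linearIndependent T.2.ge, T.2]
  rw [← card_linearIndependent hr, ← Nat.card_congr (Equiv.sigmaFiberEquiv span), Nat.card_sigma,
    sum_congr rfl fun T _ => card_fiber T, sum_const, card_univ, smul_eq_mul,
    Nat.card_eq_fintype_card (α := {T : Submodule K V // finrank K T = r})]

end Grassmannian

theorem qBin_natCast (q : ℕ) {a b : ℕ} (h : b ≤ a) :
    qBin q a b = ∏ i ∈ range b, (((q : ℚ) ^ a - (q : ℚ) ^ i) / ((q : ℚ) ^ b - (q : ℚ) ^ i)) := by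
  simp [qBin, h, zpow_natCast]

theorem qBin_one (q : ℕ) {a : ℕ} (ha : 1 ≤ a) :
    qBin q a 1 = ((q : ℚ) ^ a - 1) / ((q : ℚ) - 1) := by
  simpa using qBin_natCast q ha

theorem pow_sub_pow_pos{q : ℕ} (hq : 1 < q) {a i : ℕ} (h : i < a) : 0 < (q : ℚ) ^ a - (q : ℚ) ^ i :=
  sub_pos.2 (pow_lt_pow_right₀ (by exact_mod_cast hq) h)

theorem qBin_pos{q : ℕ} (hq : 1 < q) {a b : ℕ} (h : b ≤ a) : 0 < qBin q a b := by
  rw [qBin_natCast q h]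
  exact prod_pos fun i hi => div_pos (pow_sub_pow_pos hq ((mem_range.1 hi).trans_le h))
    (pow_sub_pow_pos hq (mem_range.1 hi))

theorem qBin_div_qBin{q : ℕ} (hq : 1 < q) {n m r : ℕ} (hrm : r ≤ m) (hmn : m ≤ n) :
    qBin q n r / qBin q m r
      = ∏ i ∈ range r, (((q : ℚ) ^ n - (q : ℚ) ^ i) / ((q : ℚ) ^ m - (q : ℚ) ^ i)) := by
  rw [qBin_natCast q (hrm.trans hmn), qBin_natCast q hrm, ← prod_div_distrib]
  exact prod_congr rfl fun i hi =>
    div_div_div_cancel_right₀ (pow_sub_pow_pos hq (mem_range.1 hi)).ne' _ _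

theorem cast_prod_pow_sub_pow {q : ℕ} (hq : 1 ≤ q) {a r : ℕ} (hra : r ≤ a) :
    ((∏ i : Fin r, (q ^ a - q ^ (i : ℕ)) : ℕ) : ℚ)
      = ∏ i ∈ range r, ((q : ℚ) ^ a - (q : ℚ) ^ i) := by
  rw [Fin.prod_univ_eq_prod_range (fun i => q ^ a - q ^ i) r, Nat.cast_prod]
  refine prod_congr rfl fun i hi => ?_
  rw [Nat.cast_sub (Nat.pow_le_pow_right hq ((mem_range.1 hi).trans_le hra).le)]
  push_cast
  rfl

theorem card_finrank_eq_qBin {K V : Type*} [DivisionRing K] [Fintype K] [AddCommGroup V]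
    [Module K V] [Finite V] {r : ℕ} (hr : r ≤ finrank K V) :
    (Nat.card {T : Submodule K V // finrank K T = r} : ℚ)
      = qBin (Fintype.card K) (finrank K V) r := by
  have hq : 1 < Fintype.card K := Fintype.one_lt_card
  have h := congrArg (Nat.cast : ℕ → ℚ) (card_finrank_eq_mul_prod (K := K) (V := V) hr)
  rw [Nat.cast_mul, cast_prod_pow_sub_pow hq.le le_rfl, cast_prod_pow_sub_pow hq.le hr] at h
  rw [qBin_natCast _ hr, prod_div_distrib, ← h, mul_div_cancel_right₀]
  exact (prod_pos fun i hi => pow_sub_pow_pos hq (mem_range.1 hi)).ne'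

theorem ncard_mul_qBin_le {K V : Type*} [DivisionRing K] [Fintype K] [AddCommGroup V]
    [Module K V] [Finite V] {C : Set (Submodule K V)} {m r : ℕ}
    (hC : ∀ U ∈ C, finrank K U = m) (hinter : C.Pairwise fun U W => finrank K ↥(U ⊓ W) < r)
    (hrm : r ≤ m) (hm : m ≤ finrank K V) :
    (C.ncard : ℚ) * qBin (Fintype.card K) m r ≤ qBin (Fintype.card K) (finrank K V) r := by
  classical
  have := Fintype.ofFinite C
  let incl : (Σ U : C, {T : Submodule K U // finrank K T = r}) →
      {T : Submodule K V // finrank K T = r} :=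
    fun p => ⟨p.2.1.map p.1.1.subtype, by rw [Submodule.finrank_map_subtype_eq, p.2.2]⟩
  have incl_injective : Function.Injective incl := by
    rintro ⟨⟨U, hU⟩, T⟩ ⟨⟨W, hW⟩, T'⟩ h
    have h' : T.1.map U.subtype = T'.1.map W.subtype := congrArg Subtype.val h
    by_cases hUW : U = W
    · subst hUW
      obtain rfl : T = T' :=
        Subtype.ext (Submodule.map_injective_of_injective U.injective_subtype h')
      rfl
    · have hle : T.1.map U.subtype ≤ U ⊓ W :=
        le_inf (Submodule.map_subtype_le _ _) (h' ▸ Submodule.map_subtype_le _ _)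
      have := Submodule.finrank_mono hle
      rw [Submodule.finrank_map_subtype_eq, T.2] at this
      exact absurd (hinter hU hW hUW) this.not_gt
  have card_fiber (U : C) : (Nat.card {T : Submodule K U // finrank K T = r} : ℚ)
      = qBin (Fintype.card K) m r := by
    rw [card_finrank_eq_qBin (by rw [hC U U.2]; exact hrm), hC U U.2]
  calc (C.ncard : ℚ) * qBin (Fintype.card K) m r
      = ∑ U : C, (Nat.card {T : Submodule K U // finrank K T = r} : ℚ) := by
        rw [sum_congr rfl fun U _ => card_fiber U, sum_const, card_univ, nsmul_eq_mul,
          Set.ncard_eq_toFinset_card', Set.toFinset_card]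
    _ = Nat.card (Σ U : C, {T : Submodule K U // finrank K T = r}) := by
        rw [Nat.card_sigma]; push_cast; rfl
    _ ≤ Nat.card {T : Submodule K V // finrank K T = r} := by
        exact_mod_cast Nat.card_le_card_of_injective incl incl_injective
    _ = qBin (Fintype.card K) (finrank K V) r := card_finrank_eq_qBin (hrm.trans hm)

theorem pow_sub_pow_div_le {q : ℕ} (hq : 1 < q) {n m y : ℕ} (hy : 1 ≤ y) (hym : y + 1 ≤ m)
    (hmn : m ≤ n) :
    ((q : ℚ) ^ n - (q : ℚ) ^ y) / ((q : ℚ) ^ m - (q : ℚ) ^ y)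
      ≤ ((q : ℚ) ^ (y + m) - 1) / ((q : ℚ) ^ y - 1) * (q : ℚ) ^ (n - m) := by
  have hq2 : (2 : ℚ) ≤ q := by exact_mod_cast hq
  set A := (q : ℚ) ^ y
  set B := (q : ℚ) ^ m
  set C := (q : ℚ) ^ (n - m)
  have hA : 2 ≤ A := le_trans (by simpa using hq2) (pow_le_pow_right₀ (by linarith) hy)
  have hAB : A + 1 ≤ B := by
    have : A * q ≤ B := by rw [← pow_succ]; exact pow_le_pow_right₀ (by linarith) hym
    nlinarith
  have hC : 0 ≤ C := by positivity
  have key : (C * B - A) * (A - 1) ≤ (A * B - 1) * C * (B - A) := by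
    have : (A * B - 1) * C * (B - A) - (C * B - A) * (A - 1)
        = C * A * (B * (B - A - 1) + 1) + A * (A - 1) := by ring
    nlinarith [mul_nonneg (mul_nonneg hC (by linarith : (0 : ℚ) ≤ A))
      (by nlinarith : (0 : ℚ) ≤ B * (B - A - 1) + 1)]
  have hn : (q : ℚ) ^ n = C * B := by rw [← pow_add, Nat.sub_add_cancel hmn]
  rw [hn, pow_add, div_mul_eq_mul_div, div_le_div_iff₀ (by linarith) (by linarith)]
  linarith

theorem qBin_succ_div_qBin_succ_le {q : ℕ} (hq : 1 < q) {n m y : ℕ} (hy : 1 ≤ y)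
    (hym : y + 1 ≤ m) (hmn : m ≤ n) :
    qBin q n ↑(y + 1) / qBin q m ↑(y + 1)
      ≤ qBin q n y * qBin q ↑(y + m) 1 / (qBin q y 1 * qBin q m y) * (q : ℚ) ^ (n - m) := by
  have hq' : (1 : ℚ) < q := by exact_mod_cast hq
  have hqy : (q : ℚ) ^ y - 1 ≠ 0 := by simpa using (pow_sub_pow_pos hq (by omega : 0 < y)).ne'
  have hrearrange :
      qBin q n y * qBin q ↑(y + m) 1 / (qBin q y 1 * qBin q m y) * (q : ℚ) ^ (n - m)
        = qBin q n y / qBin q m y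
          * (((q : ℚ) ^ (y + m) - 1) / ((q : ℚ) ^ y - 1) * (q : ℚ) ^ (n - m)) := by
    rw [qBin_one q (by omega), qBin_one q hy]
    have := (qBin_pos hq (by omega : y ≤ m)).ne'
    have : (q : ℚ) - 1 ≠ 0 := by linarith
    field_simp
  rw [hrearrange, qBin_div_qBin hq hym hmn, qBin_div_qBin hq (by omega) hmn, prod_range_succ]
  refine mul_le_mul_of_nonneg_left (pow_sub_pow_div_le hq hy hym hmn) (prod_nonneg fun i hi => ?_)
  have hi : i < m := by have := mem_range.1 hi; omega
  exact div_nonneg (pow_sub_pow_pos hq (hi.trans_le hmn)).le (pow_sub_pow_pos hq hi).le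

theorem IsCDC.finrank_inf_add_le {K : Type} [Field K] {v m : ℕ} {δ : ℤ}
    {C : Set (Submodule K (Fin v → K))} (hC : IsCDC K v (2 * δ) m C)
    {U W : Submodule K (Fin v → K)} (hU : U ∈ C) (hW : W ∈ C) (hUW : U ≠ W) :
    (finrank K ↥(U ⊓ W) : ℤ) + δ ≤ m := by
  have hdist := hC.2 U hU W hW hUW
  have hdimU := hC.1 U hU
  have hdimW := hC.1 W hW
  have hsum := Submodule.finrank_sup_add_finrank_inf_eq U W
  have hinf := Submodule.finrank_mono (inf_le_left : U ⊓ W ≤ U)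
  unfold sDist at hdist
  omega

theorem Amax_le_of_ncard_le {K : Type} [Field K] {v : ℕ} {d k : ℤ} {b : ℚ}
    (h : ∀ C, IsCDC K v d k C → (C.ncard : ℚ) ≤ b) : (Amax K v d k : ℚ) ≤ b := by
  have hb : 0 ≤ b := by simpa using h ∅ ⟨by simp, by simp⟩
  have hAmax : Amax K v d k ≤ ⌊b⌋₊ := csSup_le' fun _ ⟨C, hC, hn⟩ => Nat.le_floor (hn ▸ h C hC)
  exact (Nat.cast_le.2 hAmax).trans (Nat.floor_le hb)

theorem stmt17_general (q : ℕ) (K : Type) [Field K] [Fintype K] (hq : Fintype.card K = q)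
    (v d k : ℕ) (hd : Even d) (hdk : d / 2 < k) (hkd : k < d)
    (hkv : k + d / 2 ≤ v) :
    (Amax K (v - k) (2 * ((d : ℤ) - (k : ℤ))) ((d : ℤ) / 2) : ℚ)
      ≤ qBin q ((v : ℤ) - k) ((k : ℤ) - (d : ℤ) / 2) * qBin q (k : ℤ) 1
          / (qBin q ((k : ℤ) - (d : ℤ) / 2) 1 * qBin q ((d : ℤ) / 2) ((k : ℤ) - (d : ℤ) / 2))
          * (q : ℚ) ^ ((v : ℤ) - k - (d : ℤ) / 2) := by
  subst hq
  obtain ⟨m, rfl⟩ := hd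
  obtain ⟨y, rfl⟩ : ∃ y, k = y + m := ⟨k - m, by omega⟩
  obtain ⟨n, rfl⟩ : ∃ n, v = n + (y + m) := ⟨v - (y + m), by omega⟩
  have hm : ((m + m : ℕ) : ℤ) / 2 = m := by omega
  rw [hm, show ((n + (y + m) : ℕ) : ℤ) - ↑(y + m) = n by omega,
    show ((y + m : ℕ) : ℤ) - m = y by omega, show (n : ℤ) - m = ↑(n - m) by omega, zpow_natCast,
    show n + (y + m) - (y + m) = n by omega, show ((m + m : ℕ) : ℤ) - ↑(y + m) = ↑(m - y) by omega]
  refine Amax_le_of_ncard_le fun C hC => ?_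
  have hpacking := ncard_mul_qBin_le (C := C) (m := m) (r := y + 1)
    (fun U hU => by exact_mod_cast hC.1 U hU)
    (fun U hU W hW hUW => by have := hC.finrank_inf_add_le hU hW hUW; omega)
    (by omega) (by rw [Module.finrank_fin_fun]; omega)
  simp only [Module.finrank_fin_fun] at hpacking
  calc (C.ncard : ℚ) ≤ qBin (Fintype.card K) n ↑(y + 1) / qBin (Fintype.card K) m ↑(y + 1) :=
        (le_div_iff₀ (qBin_pos Fintype.one_lt_card (by omega))).2 hpacking
    _ ≤ _ := qBin_succ_div_qBin_succ_le Fintype.one_lt_card (by omega) (by omega) (by omega)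

/-- for `2 ≤ d/2 < k < d ≤ 2v/3` and `k + d/2 ≤ v`, with `c = 1`
and `y = k - d/2`, `A_q(v-k,2(d-k);d/2)` is at most the second summand of
Proposition 2. -/
theorem stmt17 (q : ℕ) (K : Type) [Field K] [Fintype K] (hq : Fintype.card K = q)
    (v d k : ℕ) (hd : Even d) (hd2 : 2 ≤ d / 2) (hdk : d / 2 < k) (hkd : k < d)
    (h2v3 : 3 * d ≤ 2 * v) (hkv : k + d / 2 ≤ v) :
    (Amax K (v - k) (2 * ((d : ℤ) - (k : ℤ))) ((d : ℤ) / 2) : ℚ)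
      ≤ qBin q ((v : ℤ) - k) ((k : ℤ) - (d : ℤ) / 2) * qBin q (k : ℤ) 1
          / (qBin q ((k : ℤ) - (d : ℤ) / 2) 1 * qBin q ((d : ℤ) / 2) ((k : ℤ) - (d : ℤ) / 2))
          * (q : ℚ) ^ ((v : ℤ) - k - (d : ℤ) / 2) :=
  stmt17_general q K hq v d k hd hdk hkd hkv
end
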